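/- arXiv:0810.0183 — 7 statements merged into one kernel-verified Lean document; each statement's English description precedes it below -/
import Mathlib

section
/- Let f and g belong to the real disc algebra A_ℝ(D). Then the pair (f,g) is invertible in A_ℝ(D) (i.e., there exist α, β ∈ A_ℝ(D) with αf + βg = 1) if and only if there exists δ > 0 such that |f(z)| + |g(z)| ≥ δ for all z in the closed unit disc. -/
open Complex Metric ComplexConjugate

/-- The real disc algebra `A_ℝ(D)`: functions continuous on the closed unit disc,
holomorphic on the open unit disc, satisfying `f z = conj (f (conj z))` on the closed disc. -/
def IsRDisc (f : ℂ → ℂ) : Prop :=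
  ContinuousOn f (closedBall (0 : ℂ) 1) ∧
  DifferentiableOn ℂ f (ball (0 : ℂ) 1) ∧
  ∀ z ∈ closedBall (0 : ℂ) 1, f z = conj (f (conj z))

/-- A unit of `A_ℝ(D)`: a member of the algebra with no zeros on the closed unit disc. -/
def IsRDiscUnit (f : ℂ → ℂ) : Prop :=
  IsRDisc f ∧ ∀ z ∈ closedBall (0 : ℂ) 1, f z ≠ 0

/-- The pair `(f, g)` is invertible in `A_ℝ(D)`: there are `α, β` in the algebra with
`α f + β g = 1` on the closed unit disc. -/
def BezoutPair (f g : ℂ → ℂ) : Prop :=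
  ∃ α β : ℂ → ℂ, IsRDisc α ∧ IsRDisc β ∧
    ∀ z ∈ closedBall (0 : ℂ) 1, α z * f z + β z * g z = 1

/-- The pairs `(f₁,g₁)` and `(f₂,g₂)` are sign-linked. -/
def SignLinked (f₁ g₁ f₂ g₂ : ℂ → ℂ) : Prop :=
  ∀ x y : ℝ, x ∈ Set.Icc (-1 : ℝ) 1 → y ∈ Set.Icc (-1 : ℝ) 1 →
    f₁ (x : ℂ) * g₂ (x : ℂ) - f₂ (x : ℂ) * g₁ (x : ℂ) = 0 →
    f₁ (y : ℂ) * g₂ (y : ℂ) - f₂ (y : ℂ) * g₁ (y : ℂ) = 0 →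
    ∀ lam mu : ℝ,
      f₂ (x : ℂ) = (lam : ℂ) * f₁ (x : ℂ) → g₂ (x : ℂ) = (lam : ℂ) * g₁ (x : ℂ) →
      f₂ (y : ℂ) = (mu : ℂ) * f₁ (y : ℂ) → g₂ (y : ℂ) = (mu : ℂ) * g₁ (y : ℂ) →
      0 < lam * mu

/-- `f` has constant sign on the real zeros of `g`: the (real) values `f x` over
`x ∈ [-1,1]` with `g x = 0` are either all positive or all negative. -/
def ConstSignOnRealZeros (f g : ℂ → ℂ) : Prop :=
  (∀ x ∈ Set.Icc (-1 : ℝ) 1, g (x : ℂ) = 0 → 0 < (f (x : ℂ)).re) ∨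
  (∀ x ∈ Set.Icc (-1 : ℝ) 1, g (x : ℂ) = 0 → (f (x : ℂ)).re < 0)


/-!
Necessity is compactness: Bezout coefficients are bounded on the closed disc.

For sufficiency, the functions continuous on the closed disc and holomorphic inside form a
commutative complex Banach algebra whose characters are point evaluations. Indeed, for a
character `φ` put `w = φ z`; a dilation `z ↦ a (r z)` with `r < 1` is holomorphic near the
closed disc, so it equals `a (r w) + (z - w) h` for some `h` in the algebra, whence `φ` evaluates
it at `w`; the dilations tend to `a` as `r → 1`. So `f` and `g`, having no common zero, lie in no
maximal ideal, which gives complex Bezout coefficients `α, β`; averaging each with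
`z ↦ conj (α (conj z))` makes them real.
-/

open Filter Topology WeakDual

noncomputable section

local notation "𝔻" => closedBall (0 : ℂ) 1

instance : CompactSpace 𝔻 := isCompact_iff_compactSpace.mp (isCompact_closedBall 0 1)

lemma mul_mem_closedBall_zero_one {c z : ℂ} (hc : ‖c‖ ≤ 1) (hz : z ∈ 𝔻) : c * z ∈ 𝔻 := by
  rw [mem_closedBall_zero_iff] at hz ⊢
  rw [norm_mul]
  exact mul_le_one₀ hc (norm_nonneg z) hz

lemma norm_coe_projIcc_le (r : ℝ) : ‖((Set.projIcc 0 1 zero_le_one r : ℝ) : ℂ)‖ ≤ 1 := by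
  obtain ⟨h0, h1⟩ := (Set.projIcc 0 1 zero_le_one r).2
  rwa [Complex.norm_real, Real.norm_of_nonneg h0]

lemma mul_mem_ball_zero_one {c z : ℂ} (hc : ‖c‖ ≤ 1) (hz : z ∈ ball (0 : ℂ) 1) :
    c * z ∈ ball (0 : ℂ) 1 := by
  rw [mem_ball_zero_iff] at hz ⊢
  rw [norm_mul]
  exact mul_lt_one_of_nonneg_of_lt_one_right hc (norm_nonneg z) hz

def extendDisc (a : C(𝔻, ℂ)) : ℂ → ℂ := Function.extend Subtype.val a 0

@[simp]
lemma extendDisc_apply (a : C(𝔻, ℂ)) (z : 𝔻) : extendDisc a z = a z :=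
  Subtype.val_injective.extend_apply _ _ z

lemma extendDisc_of_mem (a : C(𝔻, ℂ)) {z : ℂ} (hz : z ∈ 𝔻) : extendDisc a z = a ⟨z, hz⟩ :=
  extendDisc_apply a ⟨z, hz⟩

lemma continuousOn_extendDisc (a : C(𝔻, ℂ)) : ContinuousOn (extendDisc a) 𝔻 := by
  rw [continuousOn_iff_continuous_domRestrict]
  convert a.continuous
  ext z
  exact extendDisc_apply a z

lemma differentiableOn_extendDisc_of_eq {a : C(𝔻, ℂ)} {F : ℂ → ℂ}
    (hF : DifferentiableOn ℂ F (ball 0 1)) (ha : ∀ z : 𝔻, a z = F z) :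
    DifferentiableOn ℂ (extendDisc a) (ball 0 1) :=
  hF.congr fun z hz => by rw [extendDisc_of_mem a (ball_subset_closedBall hz), ha]

/-- The complex disc algebra `A(D)`. -/
def discAlgebra : Subalgebra ℂ C(𝔻, ℂ) where
  carrier := {a | DifferentiableOn ℂ (extendDisc a) (ball 0 1)}
  mul_mem' ha hb := differentiableOn_extendDisc_of_eq (ha.mul hb) fun z => by simp
  add_mem' ha hb := differentiableOn_extendDisc_of_eq (ha.add hb) fun z => by simp
  algebraMap_mem' c := differentiableOn_extendDisc_of_eq (differentiableOn_const c) fun z => by simp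

lemma isClosed_discAlgebra : IsClosed (discAlgebra : Set C(𝔻, ℂ)) := by
  refine isSeqClosed_iff_isClosed.mp fun u a hu hua => ?_
  have hunif :
      TendstoUniformlyOn (fun n => extendDisc (u n)) (extendDisc a) atTop (ball 0 1) := by
    rw [Metric.tendstoUniformlyOn_iff]
    intro ε hε
    filter_upwards [Metric.tendstoUniformly_iff.mp
      (ContinuousMap.tendsto_iff_tendstoUniformly.mp hua) ε hε] with n hn z hz
    have hz' := ball_subset_closedBall hz
    rw [extendDisc_of_mem _ hz', extendDisc_of_mem _ hz']
    exact hn _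
  exact hunif.tendstoLocallyUniformlyOn.differentiableOn (.of_forall hu) isOpen_ball

instance : CompleteSpace discAlgebra := isClosed_discAlgebra.completeSpace_coe

instance : NormOneClass discAlgebra := SubringClass.toNormOneClass discAlgebra

namespace DiscAlgebra

def ofDifferentiableOn (F : ℂ → ℂ) (hc : ContinuousOn F 𝔻)
    (hd : DifferentiableOn ℂ F (ball 0 1)) : discAlgebra :=
  ⟨⟨Set.domRestrict 𝔻 F, hc.domRestrict⟩, differentiableOn_extendDisc_of_eq hd fun _ => rfl⟩

@[simp]
lemma ofDifferentiableOn_apply (F : ℂ → ℂ) (hc : ContinuousOn F 𝔻)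
    (hd : DifferentiableOn ℂ F (ball 0 1)) (z : 𝔻) :
    (ofDifferentiableOn F hc hd : C(𝔻, ℂ)) z = F z :=
  rfl

def coordinate : discAlgebra := ofDifferentiableOn id continuousOn_id differentiableOn_id

lemma norm_apply_coordinate_le (φ : characterSpace ℂ discAlgebra) : ‖φ coordinate‖ ≤ 1 :=
  (AlgHom.norm_apply_le_self φ coordinate).trans <|
    (ContinuousMap.norm_le _ zero_le_one).2 fun z => mem_closedBall_zero_iff.1 z.2

theorem apply_eq_of_differentiableOn (φ : characterSpace ℂ discAlgebra) {U : Set ℂ} {F : ℂ → ℂ}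
    (hU : IsOpen U) (hDU : 𝔻 ⊆ U) (hF : DifferentiableOn ℂ F U) {a : discAlgebra}
    (ha : ∀ z : 𝔻, (a : C(𝔻, ℂ)) z = F z) : φ a = F (φ coordinate) := by
  set w := φ coordinate
  have hw : U ∈ 𝓝 w := hU.mem_nhds (hDU (mem_closedBall_zero_iff.2 (norm_apply_coordinate_le φ)))
  have hH : DifferentiableOn ℂ (dslope F w) U := (differentiableOn_dslope hw).2 hF
  set h := ofDifferentiableOn (dslope F w) (hH.continuousOn.mono hDU)
    (hH.mono (ball_subset_closedBall.trans hDU))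
  have hdiv : a = F w • 1 + (coordinate - w • 1) * h := by
    ext z
    simp only [Subalgebra.coe_add, Subalgebra.coe_mul, Subalgebra.coe_smul, Subalgebra.coe_sub,
      Subalgebra.coe_one, ContinuousMap.add_apply, ContinuousMap.mul_apply, ContinuousMap.sub_apply,
      ContinuousMap.smul_apply, ContinuousMap.one_apply, ha, coordinate, h,
      ofDifferentiableOn_apply, id]
    linear_combination (sub_smul_dslope F w z).symm
  rw [hdiv]
  simp [w]

/-- The dilation `z ↦ a (r z)`; clamping `r` to `[0, 1]` keeps it in the algebra for every `r`. -/
def dilation (a : discAlgebra) (r : ℝ) : discAlgebra :=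
  ofDifferentiableOn (fun z => extendDisc a (Set.projIcc 0 1 zero_le_one r * z))
    ((continuousOn_extendDisc a).comp (by fun_prop) fun z hz =>
      mul_mem_closedBall_zero_one (norm_coe_projIcc_le r) hz)
    (a.2.comp (by fun_prop) fun z hz => mul_mem_ball_zero_one (norm_coe_projIcc_le r) hz)

lemma dilation_one (a : discAlgebra) : dilation a 1 = a := by
  ext z
  simp [dilation]

lemma continuous_dilation (a : discAlgebra) : Continuous (dilation a) :=
  (ContinuousMap.continuous_of_continuous_uncurry _ <|
    show Continuous fun p : ℝ × 𝔻 => extendDisc a (Set.projIcc 0 1 zero_le_one p.1 * p.2) from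
    (continuousOn_extendDisc a).comp_continuous (by fun_prop)
      fun p => mul_mem_closedBall_zero_one (norm_coe_projIcc_le p.1) p.2.2).subtype_mk _

lemma apply_dilation (φ : characterSpace ℂ discAlgebra) (a : discAlgebra) {r : ℝ} (hr : r < 1) :
    φ (dilation a r) = extendDisc a (Set.projIcc 0 1 zero_le_one r * φ coordinate) := by
  set s : ℂ := ((Set.projIcc 0 1 zero_le_one r : ℝ) : ℂ)
  have hs : ‖s‖ < 1 := by
    rw [Complex.norm_real, Real.norm_of_nonneg (Set.projIcc 0 1 zero_le_one r).2.1,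
      Set.coe_projIcc]
    exact max_lt zero_lt_one (min_lt_of_right_lt hr)
  refine apply_eq_of_differentiableOn φ (U := (s * ·) ⁻¹' ball 0 1)
    (isOpen_ball.preimage (by fun_prop)) (fun z hz => ?_)
    (a.2.comp (by fun_prop) fun z hz => hz) (fun z => rfl)
  rw [Set.mem_preimage, mem_ball_zero_iff, norm_mul]
  exact (mul_le_of_le_one_right (norm_nonneg s) (mem_closedBall_zero_iff.1 hz)).trans_lt hs

theorem exists_apply_eq_eval (φ : characterSpace ℂ discAlgebra) :
    ∃ w : 𝔻, ∀ a : discAlgebra, φ a = (a : C(𝔻, ℂ)) w := by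
  set w : 𝔻 := ⟨φ coordinate, mem_closedBall_zero_iff.2 (norm_apply_coordinate_le φ)⟩
  refine ⟨w, fun a => ?_⟩
  have hagree : Set.EqOn (fun r => φ (dilation a r)) (fun r => (dilation a r : C(𝔻, ℂ)) w)
      (Set.Iio 1) :=
    fun r hr => apply_dilation φ a hr
  have := hagree.closure ((map_continuous φ).comp (continuous_dilation a))
    ((continuous_eval_const w).comp (continuous_subtype_val.comp
      (continuous_dilation a))) (by rw [closure_Iio]; exact Set.self_mem_Iic)
  simpa [dilation_one] using this

theorem span_eq_top_of_forall_exists_ne_zero {s : Set discAlgebra}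
    (hs : ∀ z : 𝔻, ∃ a ∈ s, (a : C(𝔻, ℂ)) z ≠ 0) : Ideal.span s = ⊤ := by
  by_contra hne
  obtain ⟨M, hM, hsM⟩ := Ideal.exists_le_maximal _ hne
  obtain ⟨w, hw⟩ := exists_apply_eq_eval M.toCharacterSpace
  obtain ⟨a, ha, haw⟩ := hs w
  exact haw (by rw [← hw, M.toCharacterSpace_apply_eq_zero_of_mem (hsM (Ideal.subset_span ha))])

end DiscAlgebra

open DiscAlgebra in
theorem exists_holomorphic_bezout {f g : ℂ → ℂ} (hfc : ContinuousOn f 𝔻)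
    (hfd : DifferentiableOn ℂ f (ball 0 1)) (hgc : ContinuousOn g 𝔻)
    (hgd : DifferentiableOn ℂ g (ball 0 1)) (hfg : ∀ z ∈ 𝔻, ¬(f z = 0 ∧ g z = 0)) :
    ∃ α β : ℂ → ℂ, ContinuousOn α 𝔻 ∧ DifferentiableOn ℂ α (ball 0 1) ∧
      ContinuousOn β 𝔻 ∧ DifferentiableOn ℂ β (ball 0 1) ∧
      ∀ z ∈ 𝔻, α z * f z + β z * g z = 1 := by
  set fA := ofDifferentiableOn f hfc hfd
  set gA := ofDifferentiableOn g hgc hgd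
  have hspan : Ideal.span {fA, gA} = ⊤ := span_eq_top_of_forall_exists_ne_zero fun z => by
    by_contra! h
    exact hfg z z.2 ⟨h fA (by simp), h gA (by simp)⟩
  obtain ⟨a, b, hab⟩ := Ideal.mem_span_pair.1 ((Ideal.eq_top_iff_one _).1 hspan)
  refine ⟨extendDisc a, extendDisc b, continuousOn_extendDisc a, a.2, continuousOn_extendDisc b,
    b.2, fun z hz => ?_⟩
  simpa [extendDisc_of_mem _ hz, fA, gA] using
    ContinuousMap.congr_fun (congrArg Subtype.val hab) ⟨z, hz⟩

def symmetrize (F : ℂ → ℂ) : ℂ → ℂ := fun z => (F z + conj (F (conj z))) / 2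

lemma isRDisc_symmetrize {F : ℂ → ℂ} (hc : ContinuousOn F 𝔻)
    (hd : DifferentiableOn ℂ F (ball 0 1)) : IsRDisc (symmetrize F) := by
  refine ⟨?_, ?_, fun z _ => ?_⟩
  · exact (hc.add (continuous_conj.comp_continuousOn (hc.comp continuous_conj.continuousOn
      fun z hz => by simpa using hz))).div_const 2
  · refine (hd.add fun z hz => ?_).div_const 2
    exact (differentiableAt_conj_conj_iff.2 (hd.differentiableAt
      (isOpen_ball.mem_nhds (by simpa using hz)))).differentiableWithinAt
  · simp only [symmetrize, map_div₀, map_add, conj_conj, map_ofNat]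
    ring

lemma symmetrize_bezout {f g α β : ℂ → ℂ} (hf : ∀ z ∈ 𝔻, f z = conj (f (conj z)))
    (hg : ∀ z ∈ 𝔻, g z = conj (g (conj z))) (h : ∀ z ∈ 𝔻, α z * f z + β z * g z = 1) :
    ∀ z ∈ 𝔻, symmetrize α z * f z + symmetrize β z * g z = 1 := by
  intro z hz
  have hconj := congrArg conj (h (conj z) (by simpa using hz))
  rw [map_add, map_mul, map_mul, map_one, ← hf z hz, ← hg z hz] at hconj
  simp only [symmetrize]
  linear_combination (h z hz + hconj) / 2

theorem exists_pos_le_norm_add_norm_of_bezout {X : Type*} [TopologicalSpace X] {K : Set X}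
    (hK : IsCompact K) {f g α β : X → ℂ} (hα : ContinuousOn α K) (hβ : ContinuousOn β K)
    (h : ∀ z ∈ K, α z * f z + β z * g z = 1) :
    ∃ δ : ℝ, 0 < δ ∧ ∀ z ∈ K, δ ≤ ‖f z‖ + ‖g z‖ := by
  obtain ⟨C, hC⟩ := hK.exists_bound_of_continuousOn (hα.prodMk hβ)
  refine ⟨(max C 1)⁻¹, by positivity, fun z hz => ?_⟩
  have hαβ : ‖α z‖ ≤ max C 1 ∧ ‖β z‖ ≤ max C 1 :=
    ⟨(norm_fst_le _).trans ((hC z hz).trans (le_max_left _ _)),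
      (norm_snd_le _).trans ((hC z hz).trans (le_max_left _ _))⟩
  rw [inv_le_iff_one_le_mul₀' (by positivity)]
  calc (1 : ℝ) = ‖α z * f z + β z * g z‖ := by rw [h z hz, norm_one]
    _ ≤ ‖α z‖ * ‖f z‖ + ‖β z‖ * ‖g z‖ := (norm_add_le _ _).trans_eq (by rw [norm_mul, norm_mul])
    _ ≤ max C 1 * (‖f z‖ + ‖g z‖) := by
      rw [mul_add]
      gcongr
      exacts [hαβ.1, hαβ.2]

theorem invertible_pair_iff_corona (f g : ℂ → ℂ) (hf : IsRDisc f) (hg : IsRDisc g) :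
    BezoutPair f g ↔
      ∃ δ : ℝ, 0 < δ ∧
        ∀ z ∈ closedBall (0 : ℂ) 1, δ ≤ ‖f z‖ + ‖g z‖ := by
  constructor
  · rintro ⟨α, β, hα, hβ, h⟩
    exact exists_pos_le_norm_add_norm_of_bezout (isCompact_closedBall 0 1) hα.1 hβ.1 h
  · rintro ⟨δ, hδ, hδfg⟩
    have hfg : ∀ z ∈ 𝔻, ¬(f z = 0 ∧ g z = 0) := fun z hz ⟨hfz, hgz⟩ => by
      simpa [hfz, hgz] using hδ.trans_le (hδfg z hz)
    obtain ⟨α, β, hαc, hαd, hβc, hβd, h⟩ :=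
      exists_holomorphic_bezout hf.1 hf.2.1 hg.1 hg.2.1 hfg
    exact ⟨symmetrize α, symmetrize β, isRDisc_symmetrize hαc hαd, isRDisc_symmetrize hβc hβd,
      symmetrize_bezout hf.2.2 hg.2.2 h⟩
end
end

section
/- There exist three invertible pairs (f₁,g₁), (f₂,g₂), (f₃,g₃) in the real disc algebra A_ℝ(D) such that each two of the three pairs are sign-linked, yet the three pairs are not simultaneously stabilizable: there exist no α, β ∈ A_ℝ(D) such that αf_j + βg_j is a unit of A_ℝ(D) for all j = 1, 2, 3. -/
/-! A common stabilizer `(α, β)` makes each `αf_j + βg_j` a unit of `A_ℝ(D)`, hence real,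
continuous and zero-free on `[-1, 1]`, so of constant sign there. At every real `t` the three
values are linear forms in the real numbers `α t, β t`, and for each of the eight sign patterns
one of the points `t = -1, -1/2, 0, 1` carries a vanishing combination of the three forms with
coefficients of the prescribed signs. Sign-linkedness only involves the real zeros of the
determinants, where the ratio `λ = f₂ / f₁` is forced to have one fixed sign. -/

open Complex Metric ComplexConjugate

open Set

lemma ofReal_mem_closedBall {x : ℝ} (hx : x ∈ Icc (-1 : ℝ) 1) : (x : ℂ) ∈ closedBall (0 : ℂ) 1 := by
  simpa [abs_le] using hx

lemma IsRDisc.of_differentiable {f : ℂ → ℂ} (hf : Differentiable ℂ f)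
    (hconj : ∀ z, conj (f (conj z)) = f z) : IsRDisc f :=
  ⟨hf.continuous.continuousOn, hf.differentiableOn, fun z _ => (hconj z).symm⟩

lemma IsRDisc.im_eq_zero {f : ℂ → ℂ} (hf : IsRDisc f) {x : ℝ} (hx : x ∈ Icc (-1 : ℝ) 1) :
    (f x).im = 0 := by
  have h := hf.2.2 x (ofReal_mem_closedBall hx)
  rw [conj_ofReal] at h
  exact conj_eq_iff_im.mp h.symm

def HasConstSignOn (F : ℝ → ℝ) (s : Set ℝ) : Prop :=
  MapsTo F s (Ioi 0) ∨ MapsTo F s (Iio 0)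

lemma IsRDiscUnit.hasConstSignOn_re {u : ℂ → ℂ} (hu : IsRDiscUnit u) :
    HasConstSignOn (fun t : ℝ => (u t).re) (Icc (-1) 1) := by
  refine isPreconnected_Icc.mapsTo_Ioi_or_Iio ?_ fun t ht hre => hu.2 t (ofReal_mem_closedBall ht) ?_
  · exact continuous_re.comp_continuousOn <|
      hu.1.1.comp continuous_ofReal.continuousOn fun t ht => ofReal_mem_closedBall ht
  · exact Complex.ext hre (hu.1.im_eq_zero ht)

lemma signLinked_const_left {c : ℝ} {g₁ f₂ g₂ : ℂ → ℂ}
    (h : ConstSignOnRealZeros f₂ fun z => c * g₂ z - f₂ z * g₁ z) :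
    SignLinked (fun _ => (c : ℂ)) g₁ f₂ g₂ := by
  intro x y hx hy hdx hdy lam mu hfx _ hfy _
  have hlam : (f₂ x).re = lam * c := by simp [hfx]
  have hmu : (f₂ y).re = mu * c := by simp [hfy]
  have hprod : 0 < (f₂ x).re * (f₂ y).re := by
    rcases h with h | h
    · exact mul_pos (h x hx hdx) (h y hy hdy)
    · exact mul_pos_of_neg_of_neg (h x hx hdx) (h y hy hdy)
  rw [hlam, hmu, mul_mul_mul_comm] at hprod
  exact pos_of_mul_pos_left hprod (mul_self_nonneg c)

lemma not_hasConstSignOn_all_three {a b : ℝ → ℝ} (h₁ : HasConstSignOn a (Icc (-1) 1))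
    (h₂ : HasConstSignOn (fun t => -a t + b t * (-t - 3 / 4)) (Icc (-1) 1))
    (h₃ : HasConstSignOn (fun t => a t * (1 - 2 * t) + b t * (1 / 16 - t ^ 2)) (Icc (-1) 1)) :
    False := by
  -- Up to a global sign, the sign patterns `(+,+,+)`, `(+,+,-)`, `(+,-,-)`, `(+,-,+)` of the
  -- three forms fail at `t = -1, -1/2, 0, 1` respectively.
  have m₁ : (-1 : ℝ) ∈ Icc (-1) 1 := by norm_num
  have m₂ : (-1 / 2 : ℝ) ∈ Icc (-1) 1 := by norm_num
  have m₃ : (0 : ℝ) ∈ Icc (-1) 1 := by norm_num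
  have m₄ : (1 : ℝ) ∈ Icc (-1) 1 := by norm_num
  unfold HasConstSignOn MapsTo at h₁ h₂ h₃
  simp only [mem_Ioi, mem_Iio] at h₁ h₂ h₃
  rcases h₁ with h₁ | h₁ <;> rcases h₂ with h₂ | h₂ <;> rcases h₃ with h₃ | h₃ <;>
    linarith [h₁ m₁, h₂ m₁, h₃ m₁, h₁ m₂, h₂ m₂, h₃ m₂, h₁ m₃, h₂ m₃, h₃ m₃, h₁ m₄, h₂ m₄, h₃ m₄]

theorem three_pairs_not_simultaneously_stabilizable :
    ∃ f₁ g₁ f₂ g₂ f₃ g₃ : ℂ → ℂ,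
      IsRDisc f₁ ∧ IsRDisc g₁ ∧ IsRDisc f₂ ∧ IsRDisc g₂ ∧ IsRDisc f₃ ∧ IsRDisc g₃ ∧
      BezoutPair f₁ g₁ ∧ BezoutPair f₂ g₂ ∧ BezoutPair f₃ g₃ ∧
      SignLinked f₁ g₁ f₂ g₂ ∧ SignLinked f₁ g₁ f₃ g₃ ∧ SignLinked f₂ g₂ f₃ g₃ ∧
      ¬ ∃ α β : ℂ → ℂ, IsRDisc α ∧ IsRDisc β ∧
          IsRDiscUnit (fun z => α z * f₁ z + β z * g₁ z) ∧
          IsRDiscUnit (fun z => α z * f₂ z + β z * g₂ z) ∧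
          IsRDiscUnit (fun z => α z * f₃ z + β z * g₃ z) := by
  refine ⟨fun _ => 1, fun _ => 0, fun _ => -1, fun z => -z - 3 / 4, fun z => 1 - 2 * z,
    fun z => 1 / 16 - z ^ 2, ?_, ?_, ?_, ?_, ?_, ?_, ?_, ?_, ?_, ?_, ?_, ?_, ?_⟩
  iterate 6 exact .of_differentiable (by fun_prop) fun _ => by simp [map_ofNat]
  · exact ⟨fun _ => 1, fun _ => 0, .of_differentiable (by fun_prop) fun _ => by simp,
      .of_differentiable (by fun_prop) fun _ => by simp, fun _ _ => by ring⟩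
  · exact ⟨fun _ => -1, fun _ => 0, .of_differentiable (by fun_prop) fun _ => by simp,
      .of_differentiable (by fun_prop) fun _ => by simp, fun _ _ => by ring⟩
  · exact ⟨fun z => 4 / 3 + 8 / 3 * z, fun _ => -16 / 3,
      .of_differentiable (by fun_prop) fun _ => by simp [map_ofNat],
      .of_differentiable (by fun_prop) fun _ => by simp [map_ofNat], fun _ _ => by ring⟩
  · simpa using signLinked_const_left (c := 1) (f₂ := fun _ => -1) (g₁ := fun _ => 0)
      (g₂ := fun z => -z - 3 / 4) (.inr fun _ _ _ => by norm_num)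
  · have h : ConstSignOnRealZeros (fun z => 1 - 2 * z)
        fun z => ((1 : ℝ) : ℂ) * (1 / 16 - z ^ 2) - (1 - 2 * z) * 0 := .inl fun x _ h0 => by
      have hx₀ : 16⁻¹ - x * x = 0 := by simpa [sq] using congrArg re h0
      simp only [sub_re, one_re, mul_re, re_ofNat, ofReal_re, im_ofNat, ofReal_im]
      nlinarith
    simpa using signLinked_const_left h
  · have h : ConstSignOnRealZeros (fun z => 1 - 2 * z)
        fun z => ((-1 : ℝ) : ℂ) * (1 / 16 - z ^ 2) - (1 - 2 * z) * (-z - 3 / 4) :=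
      .inr fun x hx h0 => by
        have hx₀ : x * x - 16⁻¹ - (1 - 2 * x) * (-x - 3 / 4) = 0 := by
          simpa [sq] using congrArg re h0
        simp only [sub_re, one_re, mul_re, re_ofNat, ofReal_re, im_ofNat, ofReal_im]
        nlinarith [mul_nonneg (neg_le_iff_add_nonneg.mp hx.1) (sub_nonneg.mpr hx.2)]
    simpa using signLinked_const_left h
  · rintro ⟨α, β, -, -, h₁, h₂, h₃⟩
    refine not_hasConstSignOn_all_three (a := fun t => (α t).re) (b := fun t => (β t).re) ?_ ?_ ?_
    · simpa using h₁.hasConstSignOn_re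
    · simpa [mul_re] using h₂.hasConstSignOn_re
    · simpa [mul_re, sq] using h₃.hasConstSignOn_re
end

section
/- Let R be a commutative ring with unit, let f ∈ Rⁿ be an invertible n-tuple, and suppose x ∈ Rⁿ satisfies Σ_{j=1}^n x_j f_j = 1. Then for y ∈ Rⁿ one has Σ_{j=1}^n y_j f_j = 1 if and only if there exists an n×n matrix H over R with Hᵀ = −H and zero diagonal entries such that y = x + Hf. -/
theorem representations_of_one_differ_by_antisymmetric {R : Type*} [CommRing R] {n : ℕ}
    (f x : Fin n → R) (hx : ∑ j, x j * f j = 1) (y : Fin n → R) :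
    (∑ j, y j * f j = 1) ↔
      ∃ H : Matrix (Fin n) (Fin n) R,
        H.transpose = -H ∧ (∀ i, H i i = 0) ∧ y = x + H.mulVec f := by
  constructor
  · intro hy
    refine ⟨Matrix.of fun i j => (y i - x i) * x j - x i * (y j - x j), ?_, ?_, ?_⟩
    · ext i j; simp [Matrix.transpose]; ring
    · intro i; simp only [Matrix.of_apply]; ring
    · funext i
      have h0 : ∑ j, (y j - x j) * f j = 0 := by
        simp [sub_mul, Finset.sum_sub_distrib, hx, hy]
      simp only [Pi.add_apply, Matrix.mulVec, dotProduct, Matrix.of_apply]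
      have : ∑ j, ((y i - x i) * x j - x i * (y j - x j)) * f j
          = (y i - x i) * ∑ j, x j * f j - x i * ∑ j, (y j - x j) * f j := by
        rw [Finset.mul_sum, Finset.mul_sum, ← Finset.sum_sub_distrib]
        congr 1; ext j; ring
      rw [this, hx, h0]; ring
  · rintro ⟨H, hskew, hdiag, rfl⟩
    have hH : ∀ i j, H j i = -H i j := by
      intro i j
      have := congrFun (congrFun hskew i) j
      simpa [Matrix.transpose] using this
    have hS : ∑ i, (∑ j, H i j * f j) * f i = 0 := by
      rw [show ∑ i, (∑ j, H i j * f j) * f i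
          = ∑ p ∈ (Finset.univ : Finset (Fin n × Fin n)), H p.1 p.2 * f p.2 * f p.1 by
        rw [← Finset.univ_product_univ, Finset.sum_product]
        simp [Finset.sum_mul]]
      apply Finset.sum_involution (fun p _ => (p.2, p.1))
      · intro p _
        simp only
        rw [hH p.1 p.2]
        ring
      · intro p _ hne
        intro h
        apply hne
        have : p.1 = p.2 := congrArg Prod.snd h
        rw [this, hdiag]
        simp
      · intro p _; simp
      · intro p _; simp
    simp only [Pi.add_apply, Matrix.mulVec, dotProduct, add_mul,
      Finset.sum_add_distrib, hx, hS, add_zero]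
end

section
/- Let R be a commutative ring with unit. Then the following are equivalent: (i) for every two invertible pairs (f₁,g₁), (f₂,g₂) ∈ R² there exist α, β ∈ R such that αf₁ + βg₁ and αf₂ + βg₂ are both units of R; (ii) R has Bass stable rank one, i.e., for every invertible pair (f,g) ∈ R² there exists h ∈ R such that f + hg is a unit of R. -/
theorem simultaneous_stabilization_iff_bass_stable_rank_one {R : Type*} [CommRing R] :
    (∀ f₁ g₁ f₂ g₂ : R,
        (∃ a b : R, a * f₁ + b * g₁ = 1) → (∃ a b : R, a * f₂ + b * g₂ = 1) →
        ∃ α β : R, IsUnit (α * f₁ + β * g₁) ∧ IsUnit (α * f₂ + β * g₂)) ↔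
    (∀ f g : R, (∃ a b : R, a * f + b * g = 1) → ∃ h : R, IsUnit (f + h * g)) := by
  constructor
  · intro H f g hfg
    obtain ⟨α, β, h1, h2⟩ := H f g 1 0 hfg ⟨1, 0, by ring⟩
    have hα : IsUnit α := by simpa using h2
    obtain ⟨u, hu⟩ := hα
    refine ⟨(↑u⁻¹ : R) * β, ?_⟩
    have : f + ((↑u⁻¹ : R) * β) * g = (↑u⁻¹ : R) * (α * f + β * g) := by
      rw [← hu]; linear_combination (-f) * u.inv_mul
    rw [this]
    exact (u⁻¹.isUnit).mul h1
  · intro H f₁ g₁ f₂ g₂ h1 h2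
    obtain ⟨h, hu⟩ := H f₂ g₂ h2
    obtain ⟨a, b, hab⟩ := h1
    obtain ⟨u, huu⟩ := hu
    have hinv : (↑u⁻¹ : R) * ↑u = 1 := u.inv_mul
    have key : ∃ a' b' : R, a' * (f₁ + h * g₁) + b' * (g₂ * f₁ - f₂ * g₁) = 1 := by
      refine ⟨(↑u⁻¹ : R) * (a * f₂ + b * g₂), (↑u⁻¹ : R) * (a * h - b), ?_⟩
      have expand : (a * f₂ + b * g₂) * (f₁ + h * g₁) + (a * h - b) * (g₂ * f₁ - f₂ * g₁)
          = (f₂ + h * g₂) * (a * f₁ + b * g₁) := by ring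
      calc (↑u⁻¹ : R) * (a * f₂ + b * g₂) * (f₁ + h * g₁)
            + (↑u⁻¹ : R) * (a * h - b) * (g₂ * f₁ - f₂ * g₁)
          = (↑u⁻¹ : R) * ((a * f₂ + b * g₂) * (f₁ + h * g₁)
            + (a * h - b) * (g₂ * f₁ - f₂ * g₁)) := by ring
        _ = (↑u⁻¹ : R) * ((f₂ + h * g₂) * (a * f₁ + b * g₁)) := by rw [expand]
        _ = (↑u⁻¹ : R) * (↑u * 1) := by rw [← huu, hab]
        _ = 1 := by rw [mul_one, hinv]
    obtain ⟨c, hc⟩ := H (f₁ + h * g₁) (g₂ * f₁ - f₂ * g₁) key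
    refine ⟨1 + c * g₂, h - c * f₂, ?_, ?_⟩
    · have : (1 + c * g₂) * f₁ + (h - c * f₂) * g₁
          = (f₁ + h * g₁) + c * (g₂ * f₁ - f₂ * g₁) := by ring
      rw [this]; exact hc
    · have : (1 + c * g₂) * f₂ + (h - c * f₂) * g₂ = f₂ + h * g₂ := by ring
      rw [this, ← huu]; exact u.isUnit
end

section
/- Let f be a nonconstant function in the real disc algebra A_ℝ(D) and suppose there exists a sequence of real numbers x_n converging to 0 with x_n not in the image f(D̄) of the closed unit disc under f. Then f has no zeros in the open unit disc, and f has constant sign on the open interval (-1,1): either f(x) > 0 for all x ∈ (-1,1) or f(x) < 0 for all x ∈ (-1,1). -/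
open Complex Metric ComplexConjugate

open Filter Set Topology

/-!
A nonconstant holomorphic function on the disc is an open map, so if `f` vanished at some point
of the open disc, `f '' ball 0 1` would be a neighbourhood of `0` and would contain all but
finitely many of the omitted values `x n`. On `(-1, 1)` the function is real by the symmetry
`f z = conj (f (conj z))`, so being zero-free and continuous it cannot change sign.
-/

theorem isOpen_image_ball_of_not_const {f : ℂ → ℂ} {c : ℂ} {r : ℝ} (hr : r ≠ 0)
    (hcont : ContinuousOn f (closedBall c r)) (hdiff : DifferentiableOn ℂ f (ball c r))
    (hnonconst : ¬ ∃ w : ℂ, ∀ z ∈ closedBall c r, f z = w) :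
    IsOpen (f '' ball c r) := by
  rcases (hdiff.analyticOnNhd isOpen_ball).is_constant_or_isOpen
      (convex_ball c r).isPreconnected with ⟨w, hw⟩ | hopen
  · refine absurd ⟨w, fun z hz => ?_⟩ hnonconst
    exact EqOn.of_subset_closure hw hcont continuousOn_const ball_subset_closedBall
      (closure_ball c hr).ge hz
  · exact hopen _ subset_rfl isOpen_ball

theorem forall_ne_of_tendsto_notMem_image {X Y : Type*} [TopologicalSpace Y] {f : X → Y}
    {s : Set X} (hopen : IsOpen (f '' s)) {u : ℕ → Y} {w : Y} (hu : Tendsto u atTop (𝓝 w))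
    (hmiss : ∀ n, u n ∉ f '' s) : ∀ z ∈ s, f z ≠ w := by
  rintro z hz rfl
  obtain ⟨n, hn⟩ := (hu.eventually (hopen.mem_nhds (mem_image_of_mem f hz))).exists
  exact hmiss n hn

theorem IsPreconnected.forall_lt_or_forall_gt {X α : Type*} [TopologicalSpace X] [LinearOrder α]
    [TopologicalSpace α] [OrderClosedTopology α] {s : Set X} (hs : IsPreconnected s)
    {g : X → α} (hg : ContinuousOn g s) {c : α} (hne : ∀ x ∈ s, g x ≠ c) :
    (∀ x ∈ s, c < g x) ∨ (∀ x ∈ s, g x < c) := by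
  by_contra! h
  obtain ⟨⟨a, ha, hga⟩, ⟨b, hb, hgb⟩⟩ := h
  obtain ⟨y, hy, hgy⟩ := hs.intermediate_value ha hb hg ⟨hga, hgb⟩
  exact hne y hy hgy

theorem ofReal_mem_ball_zero_one {t : ℝ} (ht : t ∈ Ioo (-1 : ℝ) 1) : (t : ℂ) ∈ ball (0 : ℂ) 1 := by
  rw [mem_ball_zero_iff, norm_real, Real.norm_eq_abs, abs_lt]
  exact ht

theorem IsRDisc.ofReal_re_apply_ofReal {f : ℂ → ℂ} (hf : IsRDisc f) {t : ℝ}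
    (ht : (t : ℂ) ∈ closedBall (0 : ℂ) 1) : ((f t).re : ℂ) = f t := by
  rw [← conj_eq_iff_re]
  nth_rw 2 [hf.2.2 t ht]
  rw [conj_ofReal]

theorem no_zeros_and_constant_sign_of_omitted_real_values (f : ℂ → ℂ) (hf : IsRDisc f)
    (hnonconst : ¬ ∃ c : ℂ, ∀ z ∈ closedBall (0 : ℂ) 1, f z = c)
    (x : ℕ → ℝ) (hx : Filter.Tendsto x Filter.atTop (nhds 0))
    (hmiss : ∀ n : ℕ, ((x n : ℂ)) ∉ f '' closedBall (0 : ℂ) 1) :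
    (∀ z ∈ ball (0 : ℂ) 1, f z ≠ 0) ∧
    ((∀ t ∈ Set.Ioo (-1 : ℝ) 1, 0 < (f (t : ℂ)).re) ∨
     (∀ t ∈ Set.Ioo (-1 : ℝ) 1, (f (t : ℂ)).re < 0)) := by
  have hopen := isOpen_image_ball_of_not_const one_ne_zero hf.1 hf.2.1 hnonconst
  have hx_coe : Tendsto (fun n => (x n : ℂ)) atTop (𝓝 0) :=
    (continuous_ofReal.tendsto' 0 0 ofReal_zero).comp hx
  have hnozero : ∀ z ∈ ball (0 : ℂ) 1, f z ≠ 0 := forall_ne_of_tendsto_notMem_image hopen hx_coe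
    fun n hn => hmiss n (image_mono ball_subset_closedBall hn)
  refine ⟨hnozero, isPreconnected_Ioo.forall_lt_or_forall_gt ?_ fun t ht hre => ?_⟩
  · exact continuous_re.comp_continuousOn <| (hf.1.mono ball_subset_closedBall).comp
      continuous_ofReal.continuousOn fun t ht => ofReal_mem_ball_zero_one ht
  · have hmem := ofReal_mem_ball_zero_one ht
    refine hnozero _ hmem ?_
    rw [← hf.ofReal_re_apply_ofReal (ball_subset_closedBall hmem), hre, ofReal_zero]
end

section
/- Let f, g be in the real disc algebra A_ℝ(D) and suppose there exist units u, v of A_ℝ(D) with uf + vg = 1. Then f has constant sign on the real zeros of g and g has constant sign on the real zeros of f. -/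
open Complex Metric ComplexConjugate

lemma memCB {x : ℝ} (hx : x ∈ Set.Icc (-1 : ℝ) 1) : (x : ℂ) ∈ closedBall (0 : ℂ) 1 := by
  simp only [mem_closedBall, dist_zero_right, Complex.norm_real, Real.norm_eq_abs]
  exact abs_le.mpr hx

lemma constSignAux {U : ℝ → ℝ} (hc : ContinuousOn U (Set.Icc (-1 : ℝ) 1))
    (hz : ∀ x ∈ Set.Icc (-1 : ℝ) 1, U x ≠ 0) :
    (∀ x ∈ Set.Icc (-1 : ℝ) 1, 0 < U x) ∨ (∀ x ∈ Set.Icc (-1 : ℝ) 1, U x < 0) := by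
  have h0 : (0 : ℝ) ∈ Set.Icc (-1 : ℝ) 1 := by constructor <;> norm_num
  have key : ∀ x ∈ Set.Icc (-1 : ℝ) 1, U x * U 0 > 0 := by
    intro x hx
    rcases (mul_ne_zero (hz x hx) (hz 0 h0)).lt_or_gt with h | h
    swap
    · exact h
    · exfalso
      have hsub : Set.uIcc x 0 ⊆ Set.Icc (-1 : ℝ) 1 := Set.uIcc_subset_Icc hx h0
      have := intermediate_value_uIcc (hc.mono hsub)
      have h0m : (0 : ℝ) ∈ Set.uIcc (U x) (U 0) := by
        rcases lt_or_gt_of_ne (hz x hx) with hxn | hxp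
        · have : 0 < U 0 := by nlinarith
          exact Set.mem_uIcc.mpr (Or.inl ⟨le_of_lt hxn, le_of_lt this⟩)
        · have : U 0 < 0 := by nlinarith
          exact Set.mem_uIcc.mpr (Or.inr ⟨le_of_lt this, le_of_lt hxp⟩)
      obtain ⟨y, hy, hy0⟩ := this h0m
      exact hz y (hsub hy) hy0
  rcases lt_or_gt_of_ne (hz 0 h0) with hn | hp
  · right; intro x hx; nlinarith [key x hx]
  · left; intro x hx; nlinarith [key x hx]

lemma constSignSide (f g u v : ℂ → ℂ) (hu : IsRDiscUnit u)
    (hbez : ∀ z ∈ closedBall (0 : ℂ) 1, u z * f z + v z * g z = 1) :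
    ConstSignOnRealZeros f g := by
  have hureal : ∀ x ∈ Set.Icc (-1 : ℝ) 1, u (x : ℂ) = ((u (x : ℂ)).re : ℂ) := by
    intro x hx
    have h := hu.1.2.2 (x : ℂ) (memCB hx)
    rw [Complex.conj_ofReal] at h
    have him : (u (x : ℂ)).im = 0 := by
      have := congrArg Complex.im h
      simp at this
      linarith
    exact (Complex.re_add_im (u x)).symm.trans (by rw [him]; simp)
  have hz : ∀ x ∈ Set.Icc (-1 : ℝ) 1, (u (x : ℂ)).re ≠ 0 := by
    intro x hx h0
    apply hu.2 (x : ℂ) (memCB hx)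
    rw [hureal x hx, h0]; simp
  have hc : ContinuousOn (fun x : ℝ => (u (x : ℂ)).re) (Set.Icc (-1 : ℝ) 1) := by
    apply Complex.continuous_re.comp_continuousOn
    exact hu.1.1.comp Complex.continuous_ofReal.continuousOn (fun x hx => memCB hx)
  have hfval : ∀ x ∈ Set.Icc (-1 : ℝ) 1, g (x : ℂ) = 0 →
      (f (x : ℂ)).re = ((u (x : ℂ)).re)⁻¹ := by
    intro x hx hgx
    have hb := hbez (x : ℂ) (memCB hx)
    rw [hgx, mul_zero, add_zero, hureal x hx] at hb
    have hne : ((u (x : ℂ)).re : ℂ) ≠ 0 := Complex.ofReal_ne_zero.mpr (hz x hx)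
    have : f (x : ℂ) = ((u (x : ℂ)).re : ℂ)⁻¹ := by
      field_simp at hb ⊢
      linear_combination hb
    rw [this, ← Complex.ofReal_inv, Complex.ofReal_re]
  rcases constSignAux hc hz with h | h
  · left; intro x hx hgx; rw [hfval x hx hgx]; exact inv_pos.mpr (h x hx)
  · right; intro x hx hgx; rw [hfval x hx hgx]; exact inv_lt_zero.mpr (h x hx)

theorem constant_sign_of_totally_reducible (f g : ℂ → ℂ)
    (hf : IsRDisc f) (hg : IsRDisc g)
    (u v : ℂ → ℂ) (hu : IsRDiscUnit u) (hv : IsRDiscUnit v)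
    (hbez : ∀ z ∈ closedBall (0 : ℂ) 1, u z * f z + v z * g z = 1) :
    ConstSignOnRealZeros f g ∧ ConstSignOnRealZeros g f := by
  refine ⟨constSignSide f g u v hu hbez, constSignSide g f v u hv ?_⟩
  intro z hz
  rw [add_comm]
  exact hbez z hz
end

section
/- Let E be a subset of the closed unit disc that is symmetric with respect to complex conjugation (z ∈ E implies conj(z) ∈ E), and let p be continuous on the closed unit disc and holomorphic on the open unit disc with p(z) = 1 for all z ∈ E and |p(z)| < 1 for all z in the closed unit disc with z ∉ E. Then the function q(z) := p(z)·conj(p(conj z)) belongs to the real disc algebra A_ℝ(D), q(z) = 1 for all z ∈ E, and |q(z)| < 1 for all z in the closed unit disc with z ∉ E. -/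
open Complex Metric ComplexConjugate

/-! The reflection `z ↦ conj (p (conj z))` of `p` is again holomorphic, and the product of `p`
with its reflection is reflection-invariant. On `E` both factors equal `1` because `E` is closed
under conjugation; off `E` the first factor has modulus `< 1` and the second modulus `≤ 1`. -/

lemma conj_mem_closedBall_zero {z : ℂ} {r : ℝ} (hz : z ∈ closedBall (0 : ℂ) r) :
    conj z ∈ closedBall (0 : ℂ) r := by
  simpa [mem_closedBall] using hz

lemma conj_mem_ball_zero {z : ℂ} {r : ℝ} (hz : z ∈ ball (0 : ℂ) r) :
    conj z ∈ ball (0 : ℂ) r := by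
  simpa [mem_ball] using hz

lemma ContinuousOn.conj_comp_conj {f : ℂ → ℂ} {r : ℝ}
    (hf : ContinuousOn f (closedBall (0 : ℂ) r)) :
    ContinuousOn (fun z => conj (f (conj z))) (closedBall (0 : ℂ) r) :=
  continuous_conj.comp_continuousOn
    (hf.comp continuous_conj.continuousOn fun _ => conj_mem_closedBall_zero)

lemma DifferentiableOn.conj_comp_conj {f : ℂ → ℂ} {r : ℝ}
    (hf : DifferentiableOn ℂ f (ball (0 : ℂ) r)) :
    DifferentiableOn ℂ (fun z => conj (f (conj z))) (ball (0 : ℂ) r) := fun _ hz =>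
  (differentiableAt_conj_conj_iff.2 <|
    hf.differentiableAt (isOpen_ball.mem_nhds (conj_mem_ball_zero hz))).differentiableWithinAt

lemma isRDisc_mul_conj_comp_conj {f : ℂ → ℂ} (hfc : ContinuousOn f (closedBall (0 : ℂ) 1))
    (hfd : DifferentiableOn ℂ f (ball (0 : ℂ) 1)) :
    IsRDisc (fun z => f z * conj (f (conj z))) :=
  ⟨hfc.mul hfc.conj_comp_conj, hfd.mul hfd.conj_comp_conj, fun _ _ => by simp [mul_comm]⟩

theorem symmetrized_peak_function_general (E : Set ℂ)
    (hsym : ∀ z ∈ E, conj z ∈ E)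
    (p : ℂ → ℂ) (hpc : ContinuousOn p (closedBall (0 : ℂ) 1))
    (hpd : DifferentiableOn ℂ p (ball (0 : ℂ) 1))
    (hpeak : ∀ z ∈ E, p z = 1)
    (hlt : ∀ z ∈ closedBall (0 : ℂ) 1, z ∉ E → ‖p z‖ < 1) :
    IsRDisc (fun z => p z * conj (p (conj z))) ∧
    (∀ z ∈ E, p z * conj (p (conj z)) = 1) ∧
    ∀ z ∈ closedBall (0 : ℂ) 1, z ∉ E → ‖p z * conj (p (conj z))‖ < 1 := by
  have hle : ∀ z ∈ closedBall (0 : ℂ) 1, ‖p z‖ ≤ 1 := fun z hz => by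
    by_cases hzE : z ∈ E
    · simp [hpeak z hzE]
    · exact (hlt z hz hzE).le
  refine ⟨isRDisc_mul_conj_comp_conj hpc hpd,
    fun z hz => by simp [hpeak z hz, hpeak _ (hsym z hz)], fun z hz hzE => ?_⟩
  rw [norm_mul, norm_conj]
  exact mul_lt_one_of_nonneg_of_lt_one_left (norm_nonneg _) (hlt z hz hzE)
    (hle _ (conj_mem_closedBall_zero hz))

theorem symmetrized_peak_function (E : Set ℂ) (hE : E ⊆ closedBall (0 : ℂ) 1)
    (hsym : ∀ z ∈ E, conj z ∈ E)
    (p : ℂ → ℂ) (hpc : ContinuousOn p (closedBall (0 : ℂ) 1))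
    (hpd : DifferentiableOn ℂ p (ball (0 : ℂ) 1))
    (hpeak : ∀ z ∈ E, p z = 1)
    (hlt : ∀ z ∈ closedBall (0 : ℂ) 1, z ∉ E → ‖p z‖ < 1) :
    IsRDisc (fun z => p z * conj (p (conj z))) ∧
    (∀ z ∈ E, p z * conj (p (conj z)) = 1) ∧
    ∀ z ∈ closedBall (0 : ℂ) 1, z ∉ E → ‖p z * conj (p (conj z))‖ < 1 :=
  symmetrized_peak_function_general E hsym p hpc hpd hpeak hlt
end
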